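/- Let G be a connected triangle-free vertex-transitive 5-regular simple graph of even order, let s = 5 or s = 6, and suppose λ_s(G) exists and λ_s(G) = s + 9. Then every λ_s-atom S of G satisfies |S| ≥ s + 5. -/

import Mathlib

open SimpleGraph

section Defs

variable {V : Type*}

/-- A simple graph is vertex-transitive if any vertex can be mapped to any other
by a graph automorphism. -/
def VertexTransitive (G : SimpleGraph V) : Prop :=
  ∀ x y : V, ∃ φ : G ≃g G, φ x = y

/-- A graph is `p`-factor-critical if the removal of any set of `p` vertices
results in a graph with a perfect matching. -/
def PFactorCritical (G : SimpleGraph V) (p : ℕ) : Prop :=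
  ∀ X : Set V, X.ncard = p → ∃ M : (G.induce Xᶜ).Subgraph, M.IsPerfectMatching

/-- A graph is factor-critical if the removal of any single vertex results in a
graph with a perfect matching. -/
def IsFactorCritical {W : Type*} (H : SimpleGraph W) : Prop :=
  ∀ v : W, ∃ M : (H.induce ({v}ᶜ : Set W)).Subgraph, M.IsPerfectMatching

/-- `∇(X)`: the set of edges of `G` with exactly one end in `X`. -/
def edgeBoundary (G : SimpleGraph V) (X : Set V) : Set (Sym2 V) :=
  {e | e ∈ G.edgeSet ∧ ∃ x ∈ X, ∃ y ∈ Xᶜ, e = s(x, y)}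

/-- The set of edges of `G` with both ends in `X`. -/
def edgesWithin (G : SimpleGraph V) (X : Set V) : Set (Sym2 V) :=
  {e | e ∈ G.edgeSet ∧ ∀ v ∈ e, v ∈ X}

/-- The set of edges of `G` with one end in `A` and the other end in `S \ A`
(i.e. the edge boundary of `A` inside the induced subgraph `G[S]` when `A ⊆ S`). -/
def inducedEdgeBoundary (G : SimpleGraph V) (S A : Set V) : Set (Sym2 V) :=
  {e | e ∈ G.edgeSet ∧ ∃ x ∈ A, ∃ y ∈ S \ A, e = s(x, y)}

/-- `F` is an `s`-restricted edge-cut of `G` if deleting `F` disconnects `G` and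
every component of `G − F` has at least `s` vertices. -/
def IsRestrictedEdgeCut (G : SimpleGraph V) (s : ℕ) (F : Set (Sym2 V)) : Prop :=
  F ⊆ G.edgeSet ∧ ¬ (G.deleteEdges F).Connected ∧
    ∀ c : (G.deleteEdges F).ConnectedComponent, s ≤ c.supp.ncard

/-- `λ_s(G)`: the minimum cardinality of an `s`-restricted edge-cut of `G`. -/
noncomputable def lambdaS (G : SimpleGraph V) (s : ℕ) : ℕ :=
  sInf (Set.ncard '' {F | IsRestrictedEdgeCut G s F})

/-- A `λ_s`-fragment: a vertex set whose edge boundary is an `s`-restricted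
edge-cut of minimum cardinality `λ_s(G)`. -/
def IsLambdaFragment (G : SimpleGraph V) (s : ℕ) (X : Set V) : Prop :=
  IsRestrictedEdgeCut G s (edgeBoundary G X) ∧ (edgeBoundary G X).ncard = lambdaS G s

/-- A `λ_s`-atom: a `λ_s`-fragment of minimum cardinality. -/
def IsLambdaAtom (G : SimpleGraph V) (s : ℕ) (X : Set V) : Prop :=
  IsLambdaFragment G s X ∧ ∀ Y : Set V, IsLambdaFragment G s Y → X.ncard ≤ Y.ncard

/-- The odd girth of `G`: the length of a shortest odd cycle of `G`. -/
noncomputable def oddGirth (G : SimpleGraph V) : ℕ :=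
  sInf {n | Odd n ∧ ∃ (v : V) (c : G.Walk v v), c.IsCycle ∧ c.length = n}

/-- `X` is an independent set of `G`. -/
def IsIndependentSet (G : SimpleGraph V) (X : Set V) : Prop :=
  ∀ x ∈ X, ∀ y ∈ X, ¬ G.Adj x y

/-- The independence number `α(G)`. -/
noncomputable def indepNum (G : SimpleGraph V) : ℕ :=
  sSup {n | ∃ X : Set V, IsIndependentSet G X ∧ X.ncard = n}

/-- The number of trivial (single-vertex) components of `G − X`. -/
noncomputable def trivialComponentCount (G : SimpleGraph V) (X : Set V) : ℕ :=
  {c : (G.induce Xᶜ).ConnectedComponent | c.supp.ncard = 1}.ncard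

/-- The number of odd components of `G − X`. -/
noncomputable def oddComponentCount (G : SimpleGraph V) (X : Set V) : ℕ :=
  {c : (G.induce Xᶜ).ConnectedComponent | Odd c.supp.ncard}.ncard

/-- The number of nontrivial components of `G − X`. -/
noncomputable def nontrivialComponentCount (G : SimpleGraph V) (X : Set V) : ℕ :=
  {c : (G.induce Xᶜ).ConnectedComponent | 2 ≤ c.supp.ncard}.ncard

/-- An imprimitive block of `G`: a proper non-empty vertex set that every
automorphism either fixes setwise or maps to a disjoint set. -/
def IsImprimitiveBlock (G : SimpleGraph V) (X : Set V) : Prop :=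
  X.Nonempty ∧ X ≠ Set.univ ∧ ∀ φ : G ≃g G, (⇑φ) '' X = X ∨ ((⇑φ) '' X) ∩ X = ∅

/-- A connected graph is `q`-extendable if it has a perfect matching and every
matching of size `q` is contained in a perfect matching. -/
def Extendable (G : SimpleGraph V) (q : ℕ) : Prop :=
  (∃ M : G.Subgraph, M.IsPerfectMatching) ∧
    ∀ M : G.Subgraph, M.IsMatching → M.edgeSet.ncard = q →
      ∃ P : G.Subgraph, P.IsPerfectMatching ∧ M ≤ P

end Defs

/-!
Write `n = |S|` and `M = 2 e(G[S])`. Five-regularity gives `|∇S| + M = 5n`, so `M = 5n - s - 9`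
is even; since the component of `G - ∇S` through a vertex of `S` stays inside `S`, `n ≥ s`, and
hence `n ∈ {s + 1, s + 3}`.

If `T ⊂ S` has `|T| ≥ s`, every vertex of `S \ T` still has a neighbour outside `S`, and
`|∇T| ≤ |∇S|`, then `G[T]` is disconnected: otherwise `∇T` would be a minimum `s`-restricted cut
with a smaller side than the atom `S`. By Mantel's theorem a disconnected triangle-free graph on
`m` vertices has at most `((m - 1)² + 1) / 4` edges, which is too few for `G[T]`. Deleting from
`S` a vertex of degree at most 2 in `G[S]`, or (when `n = s + 3`) two adjacent vertices of
degree 3, yields such a `T`. So `G[S]` has minimum degree 3 and its degree-3 vertices are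
independent, whence `M ≥ 3n` and `7M ≥ 24n`; both contradict `M = 5n - s - 9`.
-/

section EdgeBoundary

variable {V : Type*} {G : SimpleGraph V}

theorem mk_mem_edgeBoundary_iff {X : Set V} {a b : V} :
    s(a, b) ∈ edgeBoundary G X ↔ G.Adj a b ∧ ¬(a ∈ X ↔ b ∈ X) := by
  simp only [edgeBoundary, Set.mem_ofPred_eq, mem_edgeSet, Sym2.eq_iff, Set.mem_compl_iff]
  constructor
  · rintro ⟨hab, x, hx, y, hy, ⟨rfl, rfl⟩ | ⟨rfl, rfl⟩⟩ <;> simp_all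
  · rintro ⟨hab, h⟩
    by_cases ha : a ∈ X
    · exact ⟨hab, a, ha, b, by tauto, by tauto⟩
    · exact ⟨hab, b, by tauto, a, ha, by tauto⟩

theorem edgeBoundary_compl (X : Set V) : edgeBoundary G Xᶜ = edgeBoundary G X := by
  ext e
  induction e with
  | _ a b => simp only [mk_mem_edgeBoundary_iff, Set.mem_compl_iff, not_iff_not]

theorem reachable_deleteEdges_of_reachable_deleteEdges_edgeBoundary {X : Set V}
    {F : Set (Sym2 V)} (hF : ∀ a ∈ X, ∀ b ∈ X, s(a, b) ∉ F) {x y : V} (hx : x ∈ X)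
    (h : (G.deleteEdges (edgeBoundary G X)).Reachable x y) :
    y ∈ X ∧ (G.deleteEdges F).Reachable x y := by
  obtain ⟨p⟩ := h
  induction p with
  | nil => exact ⟨hx, .rfl⟩
  | cons hadj _ ih =>
    rw [deleteEdges_adj, mk_mem_edgeBoundary_iff] at hadj
    have hb := (not_not.1 (not_and.1 hadj.2 hadj.1)).1 hx
    obtain ⟨hy, hreach⟩ := ih hb
    exact ⟨hy, (Adj.reachable ((deleteEdges_adj ..).2 ⟨hadj.1, hF _ hx _ hb⟩)).trans hreach⟩

theorem mem_of_reachable_deleteEdges_edgeBoundary {X : Set V} {x y : V} (hx : x ∈ X)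
    (h : (G.deleteEdges (edgeBoundary G X)).Reachable x y) : y ∈ X :=
  (reachable_deleteEdges_of_reachable_deleteEdges_edgeBoundary (F := ∅) (by simp) hx h).1

theorem reachable_deleteEdges_edgeBoundary_of_adj {X : Set V} {a b : V} (h : a ∈ X ↔ b ∈ X)
    (hab : G.Adj a b) : (G.deleteEdges (edgeBoundary G X)).Reachable a b :=
  Adj.reachable <| (deleteEdges_adj ..).2 ⟨hab, fun he => (mk_mem_edgeBoundary_iff.1 he).2 h⟩

end EdgeBoundary

namespace SimpleGraph

variable {V : Type*} [Fintype V] [DecidableEq V] (G : SimpleGraph V) [DecidableRel G.Adj]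

open Finset

def degreeIn (B : Finset V) (x : V) : ℕ := #(G.neighborFinset x ∩ B)

-- Counts ordered pairs: `G.edgeCount A A` is twice the number of edges of `G[A]`.
def edgeCount (A B : Finset V) : ℕ := ∑ x ∈ A, G.degreeIn B x

variable {G}

theorem degreeIn_eq_sum (B : Finset V) (x : V) :
    G.degreeIn B x = ∑ y ∈ B, if G.Adj x y then 1 else 0 := by
  rw [degreeIn, ← card_filter, inter_comm]
  congr 1; ext; simp

theorem degreeIn_add_degreeIn_compl (B : Finset V) (x : V) :
    G.degreeIn B x + G.degreeIn Bᶜ x = G.degree x := by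
  rw [degreeIn, degreeIn, ← sdiff_eq_inter_compl, card_inter_add_card_sdiff,
    card_neighborFinset_eq_degree]

theorem degreeIn_erase_self (B : Finset V) (x : V) :
    G.degreeIn (B.erase x) x = G.degreeIn B x := by
  rw [degreeIn, degreeIn, inter_erase, erase_eq_of_notMem (by simp)]

theorem degreeIn_erase_add_one {B : Finset V} {x a : V} (ha : a ∈ B) (hxa : G.Adj x a) :
    G.degreeIn (B.erase a) x + 1 = G.degreeIn B x := by
  rw [degreeIn, degreeIn, inter_erase, card_erase_add_one (by simpa using ⟨hxa, ha⟩)]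

theorem exists_adj_notMem_of_degreeIn_lt {B : Finset V} {x : V}
    (h : G.degreeIn B x < G.degree x) : ∃ y ∉ B, G.Adj x y := by
  have := degreeIn_add_degreeIn_compl (G := G) B x
  obtain ⟨y, hy⟩ := card_pos.1 (show 0 < G.degreeIn Bᶜ x by omega)
  simp only [mem_inter, mem_neighborFinset, mem_compl] at hy
  exact ⟨y, hy.2, hy.1⟩

theorem edgeCount_comm (A B : Finset V) : G.edgeCount A B = G.edgeCount B A := by
  simp only [edgeCount, degreeIn_eq_sum]
  rw [sum_comm]
  simp only [G.adj_comm]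

theorem edgeCount_union_left {A A' : Finset V} (h : Disjoint A A') (B : Finset V) :
    G.edgeCount (A ∪ A') B = G.edgeCount A B + G.edgeCount A' B :=
  sum_union h

theorem edgeCount_union_right (A : Finset V) {B B' : Finset V} (h : Disjoint B B') :
    G.edgeCount A (B ∪ B') = G.edgeCount A B + G.edgeCount A B' := by
  rw [edgeCount_comm, edgeCount_union_left h, edgeCount_comm, edgeCount_comm B']

theorem edgeCount_union_self {A B : Finset V} (h : Disjoint A B) :
    G.edgeCount (A ∪ B) (A ∪ B) = G.edgeCount A A + 2 * G.edgeCount A B + G.edgeCount B B := by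
  rw [edgeCount_union_left h, edgeCount_union_right _ h, edgeCount_union_right _ h,
    edgeCount_comm B A]
  ring

theorem edgeCount_mono_right (A : Finset V) {B B' : Finset V} (h : B ⊆ B') :
    G.edgeCount A B ≤ G.edgeCount A B' :=
  sum_le_sum fun _ _ => card_le_card (inter_subset_inter_left h)

theorem edgeCount_eq_zero {A B : Finset V} (h : ∀ a ∈ A, ∀ b ∈ B, ¬ G.Adj a b) :
    G.edgeCount A B = 0 :=
  sum_eq_zero fun a ha => card_eq_zero.2 <| eq_empty_of_forall_notMem fun b hb => by
    rw [mem_inter, mem_neighborFinset] at hb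
    exact h a ha b hb.2 hb.1

theorem mul_card_le_edgeCount {A B : Finset V} {k : ℕ} (h : ∀ x ∈ A, k ≤ G.degreeIn B x) :
    k * #A ≤ G.edgeCount A B := by
  simpa [mul_comm, edgeCount] using card_nsmul_le_sum A _ k h

theorem edgeCount_erase {A : Finset V} {a : V} (ha : a ∈ A) :
    G.edgeCount A A = G.edgeCount (A.erase a) (A.erase a) + 2 * G.degreeIn A a := by
  have h := edgeCount_union_self (G := G) (disjoint_singleton_left.2 (notMem_erase a A))
  rw [← insert_eq, insert_erase ha] at h
  simp only [edgeCount, sum_singleton, degreeIn_erase_self] at h ⊢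
  have : G.degreeIn {a} a = 0 := by simp [degreeIn]
  omega

theorem edgeCount_self_eq_two_mul_card_edgeFinset (A : Finset V) :
    G.edgeCount A A = 2 * #(G.induce (A : Set V)).edgeFinset := by
  rw [← sum_degrees_eq_twice_card_edges, edgeCount, ← sum_coe_sort A]
  refine sum_congr rfl fun x _ => ?_
  have h := congrArg card (map_neighborFinset_induce (G := G) (s := (A : Set V)) x)
  rw [card_map, card_neighborFinset_eq_degree, Finset.toFinset_coe] at h
  rw [degreeIn, ← h]
  congr!

theorem even_edgeCount_self (A : Finset V) : Even (G.edgeCount A A) := by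
  rw [edgeCount_self_eq_two_mul_card_edgeFinset]; exact even_two_mul _

theorem two_mul_edgeCount_self_le_sq (htri : G.CliqueFree 3) (A : Finset V) :
    2 * G.edgeCount A A ≤ #A ^ 2 := by
  have hA : (G.induce (A : Set V)).CliqueFree (2 + 1) :=
    (cliqueFree_induce_iff _ _ _).2 htri.cliqueFreeOn
  have h := hA.card_edgeFinset_le
  simp only [coe_sort_coe, Fintype.card_coe, Nat.choose_eq_zero_of_lt (Nat.mod_lt _ two_pos),
    add_zero, Nat.add_one_sub_one, mul_one] at h
  have := Nat.div_mul_le_self (#A ^ 2 - (#A % 2) ^ 2) (2 * 2)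
  rw [edgeCount_self_eq_two_mul_card_edgeFinset]
  omega

theorem card_interedges (A B : Finset V) : #(G.interedges A B) = G.edgeCount A B := by
  rw [interedges_def, card_filter, sum_product, edgeCount]
  simp only [degreeIn_eq_sum]

theorem ncard_edgeBoundary (S : Finset V) : (edgeBoundary G S).ncard = G.edgeCount S Sᶜ := by
  have h : edgeBoundary G S = (fun p : V × V => s(p.1, p.2)) '' ↑(G.interedges S Sᶜ) := by
    ext e
    induction e with
    | _ a b =>
      simp only [Set.mem_image, mem_coe, mem_interedges_iff, mem_compl, Prod.exists,
        Sym2.eq_iff, mk_mem_edgeBoundary_iff]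
      constructor
      · rintro ⟨hab, h⟩
        by_cases ha : a ∈ S
        · exact ⟨a, b, ⟨ha, by tauto, hab⟩, .inl ⟨rfl, rfl⟩⟩
        · exact ⟨b, a, ⟨by tauto, ha, hab.symm⟩, .inr ⟨rfl, rfl⟩⟩
      · rintro ⟨x, y, ⟨hx, hy, hxy⟩, ⟨rfl, rfl⟩ | ⟨rfl, rfl⟩⟩
        · exact ⟨hxy, by tauto⟩
        · exact ⟨hxy.symm, by tauto⟩
  rw [h, Set.InjOn.ncard_image, Set.ncard_coe_finset, card_interedges]
  rintro ⟨a, b⟩ hab ⟨a', b'⟩ hab' heq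
  simp only [mem_coe, mem_interedges_iff, mem_compl] at hab hab'
  rcases Sym2.eq_iff.1 heq with ⟨rfl, rfl⟩ | ⟨rfl, rfl⟩
  · rfl
  · exact absurd hab.1 hab'.2.1

theorem ncard_edgeBoundary_add_edgeCount {d : ℕ} (hreg : G.IsRegularOfDegree d) (S : Finset V) :
    (edgeBoundary G S).ncard + G.edgeCount S S = d * #S := by
  rw [ncard_edgeBoundary, edgeCount, edgeCount, ← sum_add_distrib, mul_comm, ← smul_eq_mul,
    ← sum_const]
  exact sum_congr rfl fun x _ => by rw [add_comm, degreeIn_add_degreeIn_compl, hreg x]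

theorem two_mul_edgeCount_le_of_not_reachable (htri : G.CliqueFree 3) {T : Finset V} {x y : V}
    (hx : x ∈ T) (hy : y ∈ T) (hxy : ¬ (G.deleteEdges (edgeBoundary G T)).Reachable x y) :
    2 * G.edgeCount T T ≤ (#T - 1) ^ 2 + 1 := by
  classical
  set C := T.filter fun z => (G.deleteEdges (edgeBoundary G T)).Reachable x z
  set D := T.filter fun z => ¬ (G.deleteEdges (edgeBoundary G T)).Reachable x z
  have hCD : Disjoint C D := disjoint_filter_filter_not _ _ _
  have hT : C ∪ D = T := filter_union_filter_not_eq _ _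
  have hcross : G.edgeCount C D = 0 := edgeCount_eq_zero fun a ha b hb hab => by
    rw [mem_filter] at ha hb
    exact hb.2 (ha.2.trans (reachable_deleteEdges_edgeBoundary_of_adj
      (iff_of_true (mem_coe.2 ha.1) (mem_coe.2 hb.1)) hab))
  have hC := two_mul_edgeCount_self_le_sq htri C
  have hD := two_mul_edgeCount_self_le_sq htri D
  obtain ⟨p, hp⟩ : ∃ p, #C = p + 1 :=
    Nat.exists_eq_add_one.2 (card_pos.2 ⟨x, mem_filter.2 ⟨hx, .rfl⟩⟩)
  obtain ⟨q, hq⟩ : ∃ q, #D = q + 1 :=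
    Nat.exists_eq_add_one.2 (card_pos.2 ⟨y, mem_filter.2 ⟨hy, hxy⟩⟩)
  rw [← hT, edgeCount_union_self hCD, hcross,
    card_union_of_disjoint hCD, hp, hq, show p + 1 + (q + 1) - 1 = p + q + 1 by omega]
  rw [hp] at hC
  rw [hq] at hD
  nlinarith

theorem twentyFour_mul_card_le_seven_mul_edgeCount {S : Finset V}
    (hdeg : ∀ x ∈ S, 3 ≤ G.degreeIn S x)
    (hind : ∀ u ∈ S, ∀ w ∈ S, G.degreeIn S u = 3 → G.degreeIn S w = 3 → ¬ G.Adj u w) :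
    24 * #S ≤ 7 * G.edgeCount S S := by
  set T := S.filter (G.degreeIn S · = 3)
  set R := S.filter (¬ G.degreeIn S · = 3)
  have hTR : Disjoint T R := disjoint_filter_filter_not _ _ _
  have hS : T ∪ R = S := filter_union_filter_not_eq _ _
  have hcard := card_union_of_disjoint hTR
  have hM := edgeCount_union_left (G := G) hTR S
  rw [hS] at hcard hM
  have hT : G.edgeCount T S = 3 * #T := by
    rw [edgeCount, sum_congr rfl fun x hx => (mem_filter.1 hx).2, sum_const, smul_eq_mul,
      mul_comm]
  have hR : 4 * #R ≤ G.edgeCount R S := mul_card_le_edgeCount fun x hx => by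
    have := hdeg x (mem_filter.1 hx).1
    have := (mem_filter.1 hx).2
    omega
  have hTT : G.edgeCount T T = 0 := edgeCount_eq_zero fun u hu w hw =>
    hind u (mem_filter.1 hu).1 w (mem_filter.1 hw).1 (mem_filter.1 hu).2 (mem_filter.1 hw).2
  -- the degree-3 vertices send all their edges into `R`
  have hTR' : G.edgeCount T S ≤ G.edgeCount R S :=
    calc G.edgeCount T S = G.edgeCount T R := by
          rw [← hS, edgeCount_union_right _ hTR, hTT, zero_add]
      _ = G.edgeCount R T := edgeCount_comm _ _
      _ ≤ G.edgeCount R S := edgeCount_mono_right _ (hS ▸ subset_union_left)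
  omega

end SimpleGraph

section RestrictedCut

variable {V : Type*} {G : SimpleGraph V} {s : ℕ}

theorem lambdaS_le_ncard {F : Set (Sym2 V)} (hF : IsRestrictedEdgeCut G s F) :
    lambdaS G s ≤ F.ncard :=
  Nat.sInf_le ⟨F, hF, rfl⟩

theorem le_ncard_of_isRestrictedEdgeCut [Finite V] {S : Set V} {x : V}
    (hS : IsRestrictedEdgeCut G s (edgeBoundary G S)) (hx : x ∈ S) : s ≤ S.ncard :=
  (hS.2.2 ((G.deleteEdges (edgeBoundary G S)).connectedComponentMk x)).trans <|
    Set.ncard_le_ncard fun _ hy =>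
      mem_of_reachable_deleteEdges_edgeBoundary hx (ConnectedComponent.exact hy).symm

theorem isRestrictedEdgeCut_edgeBoundary_of_ssubset [Finite V] {S T : Set V}
    (hS : IsRestrictedEdgeCut G s (edgeBoundary G S)) (hTS : T ⊂ S) (hT : T.Nonempty)
    (hsT : s ≤ T.ncard) (hout : ∀ w ∈ S \ T, ∃ y ∉ S, G.Adj w y)
    (hconn : ∀ x ∈ T, ∀ y ∈ T, (G.deleteEdges (edgeBoundary G T)).Reachable x y) :
    IsRestrictedEdgeCut G s (edgeBoundary G T) := by
  refine ⟨fun e he => he.1, fun hc => ?_, fun c => ?_⟩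
  · obtain ⟨x, hx⟩ := hT
    obtain ⟨w, -, hwT⟩ := Set.exists_of_ssubset hTS
    exact hwT (mem_of_reachable_deleteEdges_edgeBoundary hx (hc.preconnected x w))
  obtain ⟨v, rfl⟩ := c.exists_rep
  by_cases hv : v ∈ T
  · exact hsT.trans <| Set.ncard_le_ncard fun y hy =>
      ConnectedComponent.eq.2 (hconn y hy v hv)
  obtain ⟨y₀, hy₀, hvy₀⟩ : ∃ y₀ ∉ S, (G.deleteEdges (edgeBoundary G T)).Reachable v y₀ := by
    by_cases hvS : v ∈ S
    · obtain ⟨y, hy, hvy⟩ := hout v ⟨hvS, hv⟩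
      exact ⟨y, hy, reachable_deleteEdges_edgeBoundary_of_adj
        (iff_of_false hv fun hyT => hy (hTS.1 hyT)) hvy⟩
    · exact ⟨v, hvS, .rfl⟩
  -- the component of `y₀` in `G - ∇S` lies outside `S`, hence survives in `G - ∇T`
  have hF : ∀ a ∈ Sᶜ, ∀ b ∈ Sᶜ, s(a, b) ∉ edgeBoundary G T := fun a ha b hb he =>
    (mk_mem_edgeBoundary_iff.1 he).2 (iff_of_false (fun h => ha (hTS.1 h)) fun h => hb (hTS.1 h))
  refine (hS.2.2 ((G.deleteEdges (edgeBoundary G S)).connectedComponentMk y₀)).trans <|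
    Set.ncard_le_ncard fun z hz => ConnectedComponent.eq.2 ?_
  have hy₀z := (ConnectedComponent.exact hz).symm
  rw [← edgeBoundary_compl] at hy₀z
  exact (hvy₀.trans
    (reachable_deleteEdges_of_reachable_deleteEdges_edgeBoundary hF hy₀ hy₀z).2).symm

theorem exists_not_reachable_of_isLambdaAtom [Finite V] {S T : Set V}
    (hS : IsLambdaAtom G s S) (hTS : T ⊂ S) (hT : T.Nonempty) (hsT : s ≤ T.ncard)
    (hout : ∀ w ∈ S \ T, ∃ y ∉ S, G.Adj w y)
    (hbd : (edgeBoundary G T).ncard ≤ (edgeBoundary G S).ncard) :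
    ∃ x ∈ T, ∃ y ∈ T, ¬ (G.deleteEdges (edgeBoundary G T)).Reachable x y := by
  by_contra! hconn
  have hcut := isRestrictedEdgeCut_edgeBoundary_of_ssubset hS.1.1 hTS hT hsT hout hconn
  have hfrag : IsLambdaFragment G s T :=
    ⟨hcut, le_antisymm (hbd.trans hS.1.2.le) (lambdaS_le_ncard hcut)⟩
  exact (Set.ncard_lt_ncard hTS).not_ge (hS.2 T hfrag)

end RestrictedCut

section Atom

open Finset

variable {V : Type*} [Fintype V] [DecidableEq V] {G : SimpleGraph V} [DecidableRel G.Adj]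
  {s : ℕ} {S : Finset V}

theorem two_mul_edgeCount_le_of_isLambdaAtom (htri : G.CliqueFree 3)
    (hS : IsLambdaAtom G s S) {T : Finset V} (hTS : T ⊂ S) (hT : T.Nonempty) (hsT : s ≤ #T)
    (hout : ∀ w ∈ S \ T, ∃ y ∉ S, G.Adj w y)
    (hbd : (edgeBoundary G T).ncard ≤ (edgeBoundary G S).ncard) :
    2 * G.edgeCount T T ≤ (#T - 1) ^ 2 + 1 := by
  obtain ⟨x, hx, y, hy, hxy⟩ := exists_not_reachable_of_isLambdaAtom hS (coe_ssubset.2 hTS)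
    (coe_nonempty.2 hT) (by rwa [Set.ncard_coe_finset]) (by simpa [← coe_sdiff] using hout) hbd
  exact two_mul_edgeCount_le_of_not_reachable htri hx hy hxy

theorem three_le_degreeIn_of_isLambdaAtom (hreg : G.IsRegularOfDegree 5) (htri : G.CliqueFree 3)
    (hs : s = 5 ∨ s = 6) (hS : IsLambdaAtom G s S) (hbd : (edgeBoundary G S).ncard = s + 9)
    (hn : #S = s + 1 ∨ #S = s + 3) {v : V} (hv : v ∈ S) : 3 ≤ G.degreeIn S v := by
  by_contra! hv2
  have hM := edgeCount_erase (G := G) hv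
  have hT := card_erase_add_one hv
  have hbdS := ncard_edgeBoundary_add_edgeCount hreg S
  have hbdT := ncard_edgeBoundary_add_edgeCount hreg (S.erase v)
  have hout : ∀ w ∈ S \ S.erase v, ∃ y ∉ S, G.Adj w y := fun w hw => by
    rw [sdiff_erase_self hv, mem_singleton] at hw
    exact hw ▸ exists_adj_notMem_of_degreeIn_lt (by rw [hreg v]; omega)
  have := two_mul_edgeCount_le_of_isLambdaAtom htri hS (erase_ssubset hv)
    (card_pos.1 (by omega)) (by omega) hout (by omega)
  rcases hs with rfl | rfl <;> rcases hn with hn | hn <;>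
    rw [show #(S.erase v) = #S - 1 by omega, hn] at this <;> omega

theorem not_adj_of_degreeIn_eq_three (hreg : G.IsRegularOfDegree 5) (htri : G.CliqueFree 3)
    (hs : s = 5 ∨ s = 6) (hS : IsLambdaAtom G s S) (hbd : (edgeBoundary G S).ncard = s + 9)
    (hn : #S = s + 3) {u w : V} (hu : u ∈ S) (hw : w ∈ S) (hu3 : G.degreeIn S u = 3)
    (hw3 : G.degreeIn S w = 3) : ¬ G.Adj u w := by
  intro huw
  have hw' : w ∈ S.erase u := mem_erase.2 ⟨huw.ne.symm, hw⟩
  have hM := edgeCount_erase (G := G) hu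
  have hM' := edgeCount_erase (G := G) hw'
  have hdw := degreeIn_erase_add_one (G := G) hu huw.symm
  have hT := card_erase_add_one hw'
  have hT' := card_erase_add_one hu
  have hbdS := ncard_edgeBoundary_add_edgeCount hreg S
  have hbdT := ncard_edgeBoundary_add_edgeCount hreg ((S.erase u).erase w)
  have hout : ∀ x ∈ S \ (S.erase u).erase w, ∃ y ∉ S, G.Adj x y := fun x hx => by
    have hx' : x = u ∨ x = w := by
      simp only [mem_sdiff, mem_erase] at hx
      tauto
    refine exists_adj_notMem_of_degreeIn_lt ?_
    rw [hreg x]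
    rcases hx' with rfl | rfl <;> omega
  have := two_mul_edgeCount_le_of_isLambdaAtom htri hS
    ((erase_ssubset hw').trans (erase_ssubset hu)) (card_pos.1 (by omega)) (by omega) hout
    (by omega)
  rcases hs with rfl | rfl <;>
    rw [show #((S.erase u).erase w) = #S - 2 by omega, hn] at this <;> omega

end Atom

theorem statement10_general {V : Type*} [Fintype V] [DecidableEq V]
    (G : SimpleGraph V) [DecidableRel G.Adj] (s : ℕ)
    (htri : G.CliqueFree 3)
    (hreg : G.IsRegularOfDegree 5)
    (hs : s = 5 ∨ s = 6)
    (hlam : lambdaS G s = s + 9)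
    (S : Set V) (hS : IsLambdaAtom G s S) :
    s + 5 ≤ S.ncard := by
  obtain ⟨S, rfl⟩ := S.toFinite.exists_finset_coe
  rw [Set.ncard_coe_finset]
  by_contra! hlt
  have hbd : (edgeBoundary G S).ncard = s + 9 := hS.1.2.trans hlam
  have hcount := ncard_edgeBoundary_add_edgeCount hreg S
  obtain ⟨x, hx⟩ : S.Nonempty := Finset.nonempty_iff_ne_empty.2 fun h => by
    simp [h, edgeBoundary] at hbd
  have hsS := le_ncard_of_isRestrictedEdgeCut hS.1.1 (Finset.mem_coe.2 hx)
  rw [Set.ncard_coe_finset] at hsS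
  obtain ⟨k, hk⟩ := even_edgeCount_self (G := G) S
  have hn : S.card = s + 1 ∨ S.card = s + 3 := by omega
  have hdeg : ∀ v ∈ S, 3 ≤ G.degreeIn S v := fun v hv =>
    three_le_degreeIn_of_isLambdaAtom hreg htri hs hS hbd hn hv
  rcases hn with hn | hn
  · have := mul_card_le_edgeCount hdeg
    omega
  · have := twentyFour_mul_card_le_seven_mul_edgeCount hdeg fun u hu w hw =>
      not_adj_of_degreeIn_eq_three hreg htri hs hS hbd hn hu hw
    omega

/-- Let `G` be a connected triangle-free vertex-transitive
5-regular graph of even order, `s = 5` or `6`, with `λ_s(G)` existing and equal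
to `s + 9`. Then every `λ_s`-atom `S` of `G` satisfies `|S| ≥ s + 5`. -/
theorem statement10 {V : Type*} [Fintype V] [DecidableEq V]
    (G : SimpleGraph V) [DecidableRel G.Adj] (s : ℕ)
    (hconn : G.Connected) (htri : G.CliqueFree 3) (hvt : VertexTransitive G)
    (hreg : G.IsRegularOfDegree 5) (heven : Even (Fintype.card V))
    (hs : s = 5 ∨ s = 6)
    (hex : ∃ F : Set (Sym2 V), IsRestrictedEdgeCut G s F)
    (hlam : lambdaS G s = s + 9)
    (S : Set V) (hS : IsLambdaAtom G s S) :
    s + 5 ≤ S.ncard :=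
  statement10_general G s htri hreg hs hlam S hS
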